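/- Let (b,c) be a connected graph over (X,m) and u ∈ C₀(X) ∩ 𝓕 with 𝓛u ∈ ℓ¹(X,m). Then u ∈ 𝓓₀ and 𝓠(u) = ∑_x m(x) u(x) 𝓛u(x); in particular 𝓠(u) ≤ ‖u‖_∞ · ∑_x m(x)|𝓛u(x)|. -/

import Mathlib

open Filter MeasureTheory Topology
open scoped ENNReal NNReal

noncomputable section

namespace HG

variable {X : Type*}

open scoped Classical

/-- `f` has finite support (membership in `C_c(X)`). -/
def FinSupp (f : X → ℝ) : Prop := (Function.support f).Finite

/-- Membership in `𝓕`. -/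
def MemF (b : X → X → ℝ) (f : X → ℝ) : Prop :=
  ∀ x : X, Summable fun y => b x y * |f y|

/-- The formal Laplacian `𝓛`. -/
def lap (b : X → X → ℝ) (c m : X → ℝ) (f : X → ℝ) (x : X) : ℝ :=
  (1 / m x) * ∑' y, b x y * (f x - f y) + (c x / m x) * f x

/-- The energy form `𝓠`, valued in `ℝ≥0∞`. -/
def energy (b : X → X → ℝ) (c : X → ℝ) (f : X → ℝ) : ℝ≥0∞ :=
  (1 / 2) * ∑' x, ∑' y, ENNReal.ofReal (b x y * (f x - f y) ^ 2)
    + ∑' x, ENNReal.ofReal (c x * f x ^ 2)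

/-- Membership in `𝓓`, the functions of finite energy. -/
def MemD (b : X → X → ℝ) (c : X → ℝ) (f : X → ℝ) : Prop := energy b c f < ⊤

/-- Membership in `𝓓₀`, the closure of `C_c(X)` w.r.t. `‖f‖_o = (𝓠(f)+f(o)²)^{1/2}`. -/
def MemD0 (b : X → X → ℝ) (c : X → ℝ) (o : X) (f : X → ℝ) : Prop :=
  ∃ φ : ℕ → X → ℝ, (∀ n, FinSupp (φ n)) ∧
    Tendsto (fun n => energy b c (fun x => f x - φ n x)
      + ENNReal.ofReal ((f o - φ n o) ^ 2)) atTop (nhds 0)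

/-- `(b,c)` is a connected graph over `(X,m)`. -/
structure IsGraph (b : X → X → ℝ) (c m : X → ℝ) : Prop where
  symm : ∀ x y, b x y = b y x
  nonneg : ∀ x y, 0 ≤ b x y
  loopless : ∀ x, b x x = 0
  deg_summable : ∀ x, Summable fun y => b x y
  c_nonneg : ∀ x, 0 ≤ c x
  m_pos : ∀ x, 0 < m x
  connected : ∀ x y : X, ∃ (k : ℕ) (p : ℕ → X), p 0 = x ∧ p k = y ∧
    ∀ i < k, 0 < b (p i) (p (i + 1))

/-- `u` is superharmonic: `u ∈ 𝓕` and `𝓛u ≥ 0`. -/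
def Superharmonic (b : X → X → ℝ) (c m : X → ℝ) (u : X → ℝ) : Prop :=
  MemF b u ∧ ∀ x, 0 ≤ lap b c m u x

/-- `u` is subharmonic: `u ∈ 𝓕` and `𝓛u ≤ 0`. -/
def Subharmonic (b : X → X → ℝ) (c m : X → ℝ) (u : X → ℝ) : Prop :=
  MemF b u ∧ ∀ x, lap b c m u x ≤ 0

/-- The Green operator `Gk(x) = ∑_y G(x,y) k(y)`. -/
def Gop (G : X → X → ℝ) (k : X → ℝ) (x : X) : ℝ := ∑' y, G x y * k y

/-- Membership in `𝓖`, the domain of the Green operator. -/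
def MemG (G : X → X → ℝ) (k : X → ℝ) : Prop :=
  ∀ x, Summable fun y => G x y * |k y|

/-- `u` is a potential: `u ∈ 𝓕`, `𝓛u ∈ 𝓖` and `u = G𝓛u`. -/
def IsPotential (b : X → X → ℝ) (c m : X → ℝ) (G : X → X → ℝ) (u : X → ℝ) : Prop :=
  MemF b u ∧ MemG G (lap b c m u) ∧ u = Gop G (lap b c m u)

/-- Membership in `𝓖₂ = {k ∈ 𝓖 : ∑_x m(x)|k(x)| (G|k|)(x) < ∞}`. -/
def MemG2 (m : X → ℝ) (G : X → X → ℝ) (k : X → ℝ) : Prop :=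
  MemG G k ∧ Summable fun x => m x * |k x| * Gop G (fun y => |k y|) x

/-- `G` is the Green function of the (transient) graph `(b,c)` over `(X,m)`:
for every `y`, `G(·,y)` is the unique function in `𝓓₀ ∩ 𝓕` with `𝓛 G(·,y) = 1_y`;
it is strictly positive and symmetric. -/
structure IsGreen (b : X → X → ℝ) (c m : X → ℝ) (o : X) (G : X → X → ℝ) : Prop where
  pos : ∀ x y, 0 < G x y
  symm : ∀ x y, G x y = G y x
  memF : ∀ y, MemF b fun x => G x y
  memD0 : ∀ y, MemD0 b c o fun x => G x y
  lap_eq : ∀ y x, lap b c m (fun z => G z y) x = if x = y then 1 else 0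
  unique : ∀ (y : X) (u : X → ℝ), MemF b u → MemD0 b c o u →
    (∀ x, lap b c m u x = if x = y then 1 else 0) → u = fun x => G x y

/-- `w(φ) = ∑_x m(x) w(x) φ(x)²`. -/
def wsum (m w φ : X → ℝ) : ℝ := ∑' x, m x * w x * φ x ^ 2

/-- `w` is a Hardy type weight: `𝓠(φ) ≥ ∑_x m(x) w(x) φ(x)²` for all `φ ∈ C_c(X)`. -/
def IsHardyType (b : X → X → ℝ) (c m w : X → ℝ) : Prop :=
  ∀ φ : X → ℝ, FinSupp φ → ENNReal.ofReal (wsum m w φ) ≤ energy b c φ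

/-- `w` is a Hardy weight: a non-negative Hardy type weight. -/
def IsHardy (b : X → X → ℝ) (c m w : X → ℝ) : Prop :=
  (∀ x, 0 ≤ w x) ∧ IsHardyType b c m w

/-- A Hardy weight is critical if the only Hardy weight above it is itself. -/
def IsCriticalHardy (b : X → X → ℝ) (c m w : X → ℝ) : Prop :=
  IsHardy b c m w ∧ ∀ w', IsHardy b c m w' → (∀ x, w x ≤ w' x) → w' = w

/-- A Hardy type weight is critical if the only Hardy type weight above it is itself. -/
def IsCriticalHardyType (b : X → X → ℝ) (c m w : X → ℝ) : Prop :=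
  IsHardyType b c m w ∧ ∀ w', IsHardyType b c m w' → (∀ x, w x ≤ w' x) → w' = w

/-- A ground state of `w`: a strictly positive `v ∈ 𝓕` with `𝓛v = wv`. -/
def IsGroundState (b : X → X → ℝ) (c m w v : X → ℝ) : Prop :=
  MemF b v ∧ (∀ x, 0 < v x) ∧ ∀ x, lap b c m v x = w x * v x

/-- A ground state of `w` obtained as pointwise limit of a null sequence. -/
def IsGroundStateSeq (b : X → X → ℝ) (c m w v : X → ℝ) : Prop :=
  IsGroundState b c m w v ∧
  ∃ e : ℕ → X → ℝ, (∀ n, FinSupp (e n)) ∧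
    Tendsto (fun n => (energy b c (e n)).toReal - wsum m w (e n)) atTop (nhds 0) ∧
    ∀ x, Tendsto (fun n => e n x) atTop (nhds (v x))

/-- Membership in `C₀(X)`, functions vanishing at infinity. -/
def MemC0 (f : X → ℝ) : Prop := ∀ ε : ℝ, 0 < ε → {x | ε ≤ |f x|}.Finite


/-!
Soft thresholding `u_ε = sign u · (|u| - ε)₊` is finitely supported because `u ∈ C₀(X)`.
Green's formula against `u_ε`, together with
`(u_ε x - u_ε y)² ≤ (u x - u y)(u_ε x - u_ε y)`, bounds `𝓠(u_ε)` by `‖u‖_∞ ‖𝓛u‖₁`, so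
`𝓠(u) < ∞` by Fatou. Both `u_ε` and `u - u_ε` are normal contractions of `u`, so dominated
convergence as `ε → 0` carries Green's formula over to `u` itself and gives `𝓠(u - u_ε) → 0`.
-/

/-- Soft thresholding: `trunc ε t = sign t · (|t| - ε)₊`. -/
def trunc (ε t : ℝ) : ℝ := t - max (-ε) (min ε t)

lemma trunc_sub_trunc_sq_le (ε a a' : ℝ) :
    (trunc ε a - trunc ε a') ^ 2 ≤ (a - a') * (trunc ε a - trunc ε a') := by
  simp only [trunc, max_def, min_def]
  split_ifs <;> nlinarith

lemma trunc_eq_zero_of_abs_le {ε t : ℝ} (h : |t| ≤ ε) : trunc ε t = 0 := by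
  rw [abs_le] at h
  simp only [trunc, max_def, min_def]
  split_ifs <;> linarith

lemma abs_sub_trunc_le {ε : ℝ} (hε : 0 ≤ ε) (t : ℝ) : |t - trunc ε t| ≤ ε := by
  rw [abs_le]
  simp only [trunc, max_def, min_def]
  split_ifs <;> constructor <;> linarith

lemma tendsto_trunc {α : Type*} {l : Filter α} {ε : α → ℝ} (hε₀ : ∀ k, 0 ≤ ε k)
    (hε : Tendsto ε l (𝓝 0)) (t : ℝ) : Tendsto (fun k => trunc (ε k) t) l (𝓝 t) := by
  rw [tendsto_iff_norm_sub_tendsto_zero]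
  refine squeeze_zero_norm (fun k => ?_) hε
  rw [norm_norm, Real.norm_eq_abs, abs_sub_comm]
  exact abs_sub_trunc_le (hε₀ k) t

lemma abs_le_abs_of_sq_le_mul {d e : ℝ} (h : d ^ 2 ≤ e * d) : |d| ≤ |e| :=
  sq_le_sq.1 (by nlinarith)

lemma abs_sub_le_abs_of_sq_le_mul {d e : ℝ} (h : d ^ 2 ≤ e * d) : |e - d| ≤ |e| :=
  sq_le_sq.1 (by nlinarith)

def IsNormalContraction (g f : X → ℝ) : Prop :=
  (∀ x y, |g x - g y| ≤ |f x - f y|) ∧ ∀ x, |g x| ≤ |f x|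

lemma IsNormalContraction.refl (f : X → ℝ) : IsNormalContraction f f :=
  ⟨fun _ _ => le_rfl, fun _ => le_rfl⟩

lemma mul_sq_trunc_sub_le {w : ℝ} (hw : 0 ≤ w) (ε a a' : ℝ) :
    w * (trunc ε a - trunc ε a') ^ 2 ≤ w * (a - a') * (trunc ε a - trunc ε a') := by
  rw [mul_assoc]
  exact mul_le_mul_of_nonneg_left (trunc_sub_trunc_sq_le ε a a') hw

lemma sq_trunc_le_mul {ε : ℝ} (hε : 0 ≤ ε) (t : ℝ) : trunc ε t ^ 2 ≤ t * trunc ε t := by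
  simpa [trunc_eq_zero_of_abs_le (abs_zero.trans_le hε)] using trunc_sub_trunc_sq_le ε t 0

lemma isNormalContraction_trunc {ε : ℝ} (hε : 0 ≤ ε) (f : X → ℝ) :
    IsNormalContraction (fun x => trunc ε (f x)) f :=
  ⟨fun _ _ => abs_le_abs_of_sq_le_mul (trunc_sub_trunc_sq_le ε _ _),
    fun _ => abs_le_abs_of_sq_le_mul (sq_trunc_le_mul hε _)⟩

lemma isNormalContraction_sub_trunc {ε : ℝ} (hε : 0 ≤ ε) (f : X → ℝ) :
    IsNormalContraction (fun x => f x - trunc ε (f x)) f := by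
  refine ⟨fun x y => ?_, fun x => abs_sub_le_abs_of_sq_le_mul (sq_trunc_le_mul hε _)⟩
  have := abs_sub_le_abs_of_sq_le_mul (trunc_sub_trunc_sq_le ε (f x) (f y))
  rwa [sub_sub_sub_comm]

lemma summable_of_tendsto_of_tsum_le {α ι : Type*} {l : Filter α} [l.NeBot]
    {f : α → ι → ℝ} {g : ι → ℝ} {B : ℝ} (hf₀ : ∀ k i, 0 ≤ f k i) (hf : ∀ k, Summable (f k))
    (hlim : ∀ i, Tendsto (f · i) l (𝓝 (g i))) (hB : ∀ k, ∑' i, f k i ≤ B) : Summable g :=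
  summable_of_sum_le (fun i => ge_of_tendsto' (hlim i) fun k => hf₀ k i) fun s =>
    le_of_tendsto' (tendsto_finsetSum s fun i _ => hlim i) fun k =>
      ((hf k).sum_le_tsum s fun i _ => hf₀ k i).trans (hB k)

/-- The bilinear form polarizing `energy`, as real sums (junk unless they converge). -/
def energyForm (b : X → X → ℝ) (c : X → ℝ) (f g : X → ℝ) : ℝ :=
  2⁻¹ * ∑' p : X × X, b p.1 p.2 * (f p.1 - f p.2) * (g p.1 - g p.2) + ∑' x, c x * f x * g x

lemma energyForm_self (b : X → X → ℝ) (c : X → ℝ) (f : X → ℝ) :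
    energyForm b c f f =
      2⁻¹ * ∑' p : X × X, b p.1 p.2 * (f p.1 - f p.2) ^ 2 + ∑' x, c x * f x ^ 2 := by
  simp only [energyForm, mul_assoc, ← sq]

lemma energy_eq_ofReal_energyForm {b : X → X → ℝ} {c : X → ℝ} {f : X → ℝ}
    (hb : ∀ x y, 0 ≤ b x y) (hc : ∀ x, 0 ≤ c x)
    (hE : Summable fun p : X × X => b p.1 p.2 * (f p.1 - f p.2) ^ 2)
    (hC : Summable fun x => c x * f x ^ 2) :
    energy b c f = ENNReal.ofReal (energyForm b c f f) := by
  have hE₀ : ∀ p : X × X, 0 ≤ b p.1 p.2 * (f p.1 - f p.2) ^ 2 := fun p =>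
    mul_nonneg (hb _ _) (sq_nonneg _)
  have hC₀ : ∀ x, 0 ≤ c x * f x ^ 2 := fun x => mul_nonneg (hc x) (sq_nonneg _)
  rw [energyForm_self, energy, ← ENNReal.tsum_prod, ← ENNReal.ofReal_tsum_of_nonneg hE₀ hE,
    ← ENNReal.ofReal_tsum_of_nonneg hC₀ hC,
    ENNReal.ofReal_add (mul_nonneg (by norm_num) (tsum_nonneg hE₀)) (tsum_nonneg hC₀),
    ENNReal.ofReal_mul (by norm_num), ENNReal.ofReal_inv_of_pos two_pos, ENNReal.ofReal_ofNat,
    one_div]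

lemma toReal_energy_eq_energyForm {b : X → X → ℝ} {c : X → ℝ} {f : X → ℝ}
    (hb : ∀ x y, 0 ≤ b x y) (hc : ∀ x, 0 ≤ c x)
    (hE : Summable fun p : X × X => b p.1 p.2 * (f p.1 - f p.2) ^ 2)
    (hC : Summable fun x => c x * f x ^ 2) :
    (energy b c f).toReal = energyForm b c f f := by
  rw [energy_eq_ofReal_energyForm hb hc hE hC, ENNReal.toReal_ofReal]
  rw [energyForm_self]
  exact add_nonneg (mul_nonneg (by norm_num) (tsum_nonneg fun _ => mul_nonneg (hb _ _)
    (sq_nonneg _))) (tsum_nonneg fun _ => mul_nonneg (hc _) (sq_nonneg _))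

section NormalContraction

variable {b : X → X → ℝ} {c : X → ℝ} {F : X → ℝ}

lemma IsNormalContraction.summable_sq_sub {g : X → ℝ} (hg : IsNormalContraction g F)
    (hb : ∀ x y, 0 ≤ b x y) (hE : Summable fun p : X × X => b p.1 p.2 * (F p.1 - F p.2) ^ 2) :
    Summable fun p : X × X => b p.1 p.2 * (g p.1 - g p.2) ^ 2 :=
  hE.of_nonneg_of_le (fun _ => mul_nonneg (hb _ _) (sq_nonneg _)) fun _ =>
    mul_le_mul_of_nonneg_left (sq_le_sq.2 (hg.1 _ _)) (hb _ _)

lemma IsNormalContraction.summable_mul_sq {g : X → ℝ} (hg : IsNormalContraction g F)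
    (hc : ∀ x, 0 ≤ c x) (hC : Summable fun x => c x * F x ^ 2) :
    Summable fun x => c x * g x ^ 2 :=
  hC.of_nonneg_of_le (fun x => mul_nonneg (hc x) (sq_nonneg _)) fun x =>
    mul_le_mul_of_nonneg_left (sq_le_sq.2 (hg.2 x)) (hc x)

lemma abs_mul_mul_le_mul_sq {w s t r : ℝ} (hw : 0 ≤ w) (hs : |s| ≤ |r|) (ht : |t| ≤ |r|) :
    |w * s * t| ≤ w * r ^ 2 := by
  rw [abs_mul, abs_mul, abs_of_nonneg hw, mul_assoc, ← sq_abs r, sq]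
  gcongr

lemma tendsto_energyForm {α : Type*} {l : Filter α} {f g : α → X → ℝ} {f₀ g₀ : X → ℝ}
    (hb : ∀ x y, 0 ≤ b x y) (hc : ∀ x, 0 ≤ c x)
    (hE : Summable fun p : X × X => b p.1 p.2 * (F p.1 - F p.2) ^ 2)
    (hC : Summable fun x => c x * F x ^ 2)
    (hf : ∀ k, IsNormalContraction (f k) F) (hg : ∀ k, IsNormalContraction (g k) F)
    (hf₀ : ∀ x, Tendsto (f · x) l (𝓝 (f₀ x))) (hg₀ : ∀ x, Tendsto (g · x) l (𝓝 (g₀ x))) :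
    Tendsto (fun k => energyForm b c (f k) (g k)) l (𝓝 (energyForm b c f₀ g₀)) := by
  refine ((tendsto_tsum_of_dominated_convergence hE (fun p => ?_) ?_).const_mul 2⁻¹).add
    (tendsto_tsum_of_dominated_convergence hC (fun x => ?_) ?_)
  · exact (((hf₀ p.1).sub (hf₀ p.2)).const_mul _).mul ((hg₀ p.1).sub (hg₀ p.2))
  · exact Eventually.of_forall fun k p =>
      abs_mul_mul_le_mul_sq (hb _ _) ((hf k).1 _ _) ((hg k).1 _ _)
  · exact ((hf₀ x).const_mul _).mul (hg₀ x)
  · exact Eventually.of_forall fun k x =>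
      abs_mul_mul_le_mul_sq (hc x) ((hf k).2 x) ((hg k).2 x)

end NormalContraction

lemma FinSupp.summable_mul {v : X → ℝ} (hv : FinSupp v) (g : X → ℝ) :
    Summable fun x => v x * g x :=
  summable_of_hasFiniteSupport (hv.subset (Function.support_mul_subset_left _ _))

lemma FinSupp.summable_prod_mul {v : X → ℝ} (hv : FinSupp v) {g : X × X → ℝ}
    (hg : ∀ x, Summable fun y => g (x, y)) : Summable fun p : X × X => v p.1 * g p := by
  refine Summable.of_abs ((summable_prod_of_nonneg fun p => abs_nonneg _).2 ⟨fun x => ?_, ?_⟩)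
  · simpa only [abs_mul] using (hg x).abs.mul_left |v x|
  · simp only [abs_mul, tsum_mul_left]
    exact summable_of_hasFiniteSupport (hv.subset fun x hx => by
      simpa using Function.support_mul_subset_left _ _ hx)

lemma MemC0.bddAbove_abs {u : X → ℝ} (hu : MemC0 u) : BddAbove (Set.range fun x => |u x|) := by
  obtain ⟨B, hB⟩ := ((hu 1 one_pos).image fun x => |u x|).bddAbove
  refine ⟨max 1 B, ?_⟩
  rintro _ ⟨x, rfl⟩
  rcases le_or_gt 1 |u x| with h | h
  · exact le_max_of_le_right (hB (Set.mem_image_of_mem _ h))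
  · exact le_max_of_le_left h.le

lemma MemC0.finSupp_trunc {u : X → ℝ} (hu : MemC0 u) {ε : ℝ} (hε : 0 < ε) :
    FinSupp fun x => trunc ε (u x) :=
  (hu ε hε).subset fun x hx => by
    by_contra h
    exact hx (trunc_eq_zero_of_abs_le (not_le.1 h).le)

lemma summable_abs_mul_abs_of_bddAbove {u L : X → ℝ} (hu : BddAbove (Set.range fun x => |u x|))
    (hL : Summable fun x => |L x|) : Summable fun x => |u x| * |L x| :=
  (hL.mul_left _).of_nonneg_of_le (fun _ => by positivity) fun x =>
    mul_le_mul_of_nonneg_right (le_ciSup hu x) (abs_nonneg _)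

lemma tsum_mul_le_iSup_abs_mul {u v L : X → ℝ} (hu : BddAbove (Set.range fun x => |u x|))
    (hvu : ∀ x, |v x| ≤ |u x|) (hL : Summable fun x => |L x|) :
    ∑' x, v x * L x ≤ (⨆ x, |u x|) * ∑' x, |L x| := by
  have hle : ∀ x, |v x * L x| ≤ (⨆ x, |u x|) * |L x| := fun x => by
    rw [abs_mul]
    exact mul_le_mul_of_nonneg_right ((hvu x).trans (le_ciSup hu x)) (abs_nonneg _)
  rw [← tsum_mul_left]
  exact (Summable.of_norm_bounded (hL.mul_left _) hle).tsum_le_tsum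
    (fun x => (le_abs_self _).trans (hle x)) (hL.mul_left _)

section Graph

variable {b : X → X → ℝ} {c m : X → ℝ}

lemma IsGraph.summable_mul_sub (hg : IsGraph b c m) {u : X → ℝ} (hu : MemF b u) (x : X) :
    Summable fun y => b x y * (u x - u y) := by
  refine Summable.of_norm_bounded (((hg.deg_summable x).mul_right |u x|).add (hu x)) fun y => ?_
  rw [Real.norm_eq_abs, abs_mul, abs_of_nonneg (hg.nonneg x y), ← mul_add]
  exact mul_le_mul_of_nonneg_left (abs_sub _ _) (hg.nonneg x y)

lemma IsGraph.mul_lap (hg : IsGraph b c m) (u : X → ℝ) (x : X) :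
    m x * lap b c m u x = ∑' y, b x y * (u x - u y) + c x * u x := by
  have := (hg.m_pos x).ne'
  simp only [lap]
  field_simp

lemma IsGraph.mul_sub_mul_sub_eq (hg : IsGraph b c m) (u v : X → ℝ) (p : X × X) :
    b p.1 p.2 * (u p.1 - u p.2) * (v p.1 - v p.2)
      = v p.1 * (b p.1 p.2 * (u p.1 - u p.2)) + v p.2 * (b p.2 p.1 * (u p.2 - u p.1)) := by
  rw [hg.symm p.2 p.1]
  ring

lemma IsGraph.summable_mul_sub_mul_sub (hg : IsGraph b c m) {u v : X → ℝ} (hu : MemF b u)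
    (hv : FinSupp v) :
    Summable fun p : X × X => b p.1 p.2 * (u p.1 - u p.2) * (v p.1 - v p.2) := by
  have h := hv.summable_prod_mul (g := fun p => b p.1 p.2 * (u p.1 - u p.2))
    (hg.summable_mul_sub hu)
  exact (h.add h.prod_symm).congr fun p => (hg.mul_sub_mul_sub_eq u v p).symm

lemma IsGraph.tsum_mul_mul_lap_eq_energyForm (hg : IsGraph b c m) {u v : X → ℝ}
    (hu : MemF b u) (hv : FinSupp v) : ∑' x, v x * (m x * lap b c m u x) = energyForm b c u v := by
  set g : X × X → ℝ := fun p => v p.1 * (b p.1 p.2 * (u p.1 - u p.2))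
  have hgs : Summable g := hv.summable_prod_mul (hg.summable_mul_sub hu)
  have hcross : ∑' p : X × X, b p.1 p.2 * (u p.1 - u p.2) * (v p.1 - v p.2)
      = 2 * ∑' x, v x * ∑' y, b x y * (u x - u y) := by
    calc ∑' p : X × X, b p.1 p.2 * (u p.1 - u p.2) * (v p.1 - v p.2)
        = ∑' p, g p + ∑' p : X × X, g p.swap := by
          rw [← hgs.tsum_add hgs.prod_symm]
          exact tsum_congr (hg.mul_sub_mul_sub_eq u v)
      _ = 2 * ∑' x, v x * ∑' y, b x y * (u x - u y) := by
          rw [show ∑' p : X × X, g p.swap = ∑' p, g p from (Equiv.prodComm X X).tsum_eq g,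
            hgs.tsum_prod, two_mul]
          simp only [g, tsum_mul_left]
  simp only [energyForm, hcross, hg.mul_lap, mul_add]
  rw [(hv.summable_mul _).tsum_add (hv.summable_mul _)]
  simp only [mul_comm (v _) (c _ * u _)]
  ring

variable {u : X → ℝ}

lemma IsGraph.abs_mul_lap (hg : IsGraph b c m) (x : X) :
    |m x * lap b c m u x| = m x * |lap b c m u x| := by
  rw [abs_mul, abs_of_pos (hg.m_pos x)]

lemma IsGraph.tsum_mul_mul_lap_le (hg : IsGraph b c m) (hu : MemC0 u)
    (hl1 : Summable fun x => m x * |lap b c m u x|) {v : X → ℝ} (hvu : ∀ x, |v x| ≤ |u x|) :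
    ∑' x, v x * (m x * lap b c m u x) ≤ (⨆ x, |u x|) * ∑' x, m x * |lap b c m u x| := by
  simpa only [hg.abs_mul_lap] using
    tsum_mul_le_iSup_abs_mul (L := fun x => m x * lap b c m u x) hu.bddAbove_abs hvu
      (hl1.congr fun x => (hg.abs_mul_lap x).symm)

lemma IsGraph.summable_sq_sub_trunc (hg : IsGraph b c m) (huF : MemF b u) (hu : MemC0 u)
    {ε : ℝ} (hε : 0 < ε) :
    Summable fun p : X × X => b p.1 p.2 * (trunc ε (u p.1) - trunc ε (u p.2)) ^ 2 :=
  (hg.summable_mul_sub_mul_sub huF (hu.finSupp_trunc hε)).of_nonneg_of_le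
    (fun _ => mul_nonneg (hg.nonneg _ _) (sq_nonneg _))
    fun _ => mul_sq_trunc_sub_le (hg.nonneg _ _) ..

/-- By Green's formula, since `(φ x - φ y)² ≤ (u x - u y)(φ x - φ y)` for `φ = trunc ε ∘ u`. -/
lemma IsGraph.energyForm_trunc_le (hg : IsGraph b c m) (huF : MemF b u) (hu : MemC0 u)
    (hl1 : Summable fun x => m x * |lap b c m u x|) {ε : ℝ} (hε : 0 < ε) :
    energyForm b c (fun x => trunc ε (u x)) (fun x => trunc ε (u x))
      ≤ (⨆ x, |u x|) * ∑' x, m x * |lap b c m u x| := by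
  have hφ := hu.finSupp_trunc hε
  have hpoint : ∀ x, c x * trunc ε (u x) ^ 2 ≤ c x * u x * trunc ε (u x) := fun x => by
    rw [mul_assoc]
    exact mul_le_mul_of_nonneg_left (sq_trunc_le_mul hε.le _) (hg.c_nonneg x)
  have hφc : Summable fun x => c x * trunc ε (u x) ^ 2 :=
    (hφ.summable_mul fun x => c x * trunc ε (u x)).congr fun x => by ring
  have huc : Summable fun x => c x * u x * trunc ε (u x) :=
    (hφ.summable_mul fun x => c x * u x).congr fun x => by ring
  calc energyForm b c (fun x => trunc ε (u x)) (fun x => trunc ε (u x))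
      ≤ energyForm b c u fun x => trunc ε (u x) := by
        rw [energyForm_self, energyForm]
        gcongr 2⁻¹ * ?_ + ?_
        · exact (hg.summable_sq_sub_trunc huF hu hε).tsum_le_tsum
            (fun _ => mul_sq_trunc_sub_le (hg.nonneg _ _) ..)
            (hg.summable_mul_sub_mul_sub (v := fun x => trunc ε (u x)) huF hφ)
        · exact hφc.tsum_le_tsum hpoint huc
    _ = ∑' x, trunc ε (u x) * (m x * lap b c m u x) :=
        (hg.tsum_mul_mul_lap_eq_energyForm huF hφ).symm
    _ ≤ _ := hg.tsum_mul_mul_lap_le hu hl1 (isNormalContraction_trunc hε.le u).2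

lemma IsGraph.summable_energy_of_memC0 (hg : IsGraph b c m) (huF : MemF b u) (hu : MemC0 u)
    (hl1 : Summable fun x => m x * |lap b c m u x|) :
    (Summable fun p : X × X => b p.1 p.2 * (u p.1 - u p.2) ^ 2) ∧
      Summable fun x => c x * u x ^ 2 := by
  set ε : ℕ → ℝ := fun k => 1 / ((k : ℝ) + 1)
  have hε : ∀ k, 0 < ε k := fun k => by positivity
  have hlim : ∀ x, Tendsto (fun k => trunc (ε k) (u x)) atTop (𝓝 (u x)) := fun x =>
    tendsto_trunc (fun k => (hε k).le) tendsto_one_div_add_atTop_nhds_zero_nat (u x)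
  set B := (⨆ x, |u x|) * ∑' x, m x * |lap b c m u x|
  have hbound : ∀ k, 2⁻¹ * ∑' p : X × X, b p.1 p.2 * (trunc (ε k) (u p.1) - trunc (ε k) (u p.2)) ^ 2
      + ∑' x, c x * trunc (ε k) (u x) ^ 2 ≤ B := fun k => by
    simpa only [energyForm_self] using hg.energyForm_trunc_le huF hu hl1 (hε k)
  have hpair₀ : ∀ k (p : X × X),
      0 ≤ b p.1 p.2 * (trunc (ε k) (u p.1) - trunc (ε k) (u p.2)) ^ 2 :=
    fun _ _ => mul_nonneg (hg.nonneg _ _) (sq_nonneg _)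
  have hpoint₀ : ∀ k x, 0 ≤ c x * trunc (ε k) (u x) ^ 2 :=
    fun _ x => mul_nonneg (hg.c_nonneg x) (sq_nonneg _)
  constructor
  · refine summable_of_tendsto_of_tsum_le (B := 2 * B) hpair₀
      (fun k => hg.summable_sq_sub_trunc huF hu (hε k))
      (fun p => (((hlim p.1).sub (hlim p.2)).pow 2).const_mul _) fun k => ?_
    linarith [hbound k, (tsum_nonneg (hpoint₀ k) : (0 : ℝ) ≤ ∑' x, _)]
  · refine summable_of_tendsto_of_tsum_le (B := B) hpoint₀
      (fun k => ((hu.finSupp_trunc (hε k)).summable_mul fun x =>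
        c x * trunc (ε k) (u x)).congr fun x => by ring)
      (fun x => ((hlim x).pow 2).const_mul _) fun k => ?_
    linarith [hbound k, (tsum_nonneg (hpair₀ k) : (0 : ℝ) ≤ ∑' p, _)]

lemma IsGraph.energyForm_self_eq_tsum (hg : IsGraph b c m) (huF : MemF b u) (hu : MemC0 u)
    (hl1 : Summable fun x => m x * |lap b c m u x|) :
    energyForm b c u u = ∑' x, u x * (m x * lap b c m u x) := by
  obtain ⟨hE, hC⟩ := hg.summable_energy_of_memC0 huF hu hl1
  set ε : ℕ → ℝ := fun k => 1 / ((k : ℝ) + 1)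
  have hε : ∀ k, 0 < ε k := fun k => by positivity
  have hlim : ∀ x, Tendsto (fun k => trunc (ε k) (u x)) atTop (𝓝 (u x)) := fun x =>
    tendsto_trunc (fun k => (hε k).le) tendsto_one_div_add_atTop_nhds_zero_nat (u x)
  have hform := tendsto_energyForm hg.nonneg hg.c_nonneg hE hC (fun _ => .refl u)
    (fun k => isNormalContraction_trunc (hε k).le u) (fun _ => tendsto_const_nhds) hlim
  have hpairing : Tendsto (fun k => ∑' x, trunc (ε k) (u x) * (m x * lap b c m u x)) atTop
      (𝓝 (∑' x, u x * (m x * lap b c m u x))) := by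
    refine tendsto_tsum_of_dominated_convergence (summable_abs_mul_abs_of_bddAbove
      hu.bddAbove_abs (hl1.congr fun x => (hg.abs_mul_lap x).symm)) (fun x => (hlim x).mul_const _)
      (Eventually.of_forall fun k x => ?_)
    rw [Real.norm_eq_abs, abs_mul]
    exact mul_le_mul_of_nonneg_right ((isNormalContraction_trunc (hε k).le u).2 x) (abs_nonneg _)
  refine tendsto_nhds_unique hform (hpairing.congr fun k => ?_)
  exact hg.tsum_mul_mul_lap_eq_energyForm huF (hu.finSupp_trunc (hε k))

lemma IsGraph.memD0_of_memC0 (hg : IsGraph b c m) (huF : MemF b u) (hu : MemC0 u)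
    (hl1 : Summable fun x => m x * |lap b c m u x|) (o : X) : MemD0 b c o u := by
  obtain ⟨hE, hC⟩ := hg.summable_energy_of_memC0 huF hu hl1
  set ε : ℕ → ℝ := fun k => 1 / ((k : ℝ) + 1)
  have hε : ∀ k, 0 < ε k := fun k => by positivity
  have hw : ∀ k, IsNormalContraction (fun x => u x - trunc (ε k) (u x)) u := fun k =>
    isNormalContraction_sub_trunc (hε k).le u
  have hlim : ∀ x, Tendsto (fun k => u x - trunc (ε k) (u x)) atTop (𝓝 0) := fun x => by
    simpa using (tendsto_const_nhds (x := u x)).sub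
      (tendsto_trunc (fun k => (hε k).le) tendsto_one_div_add_atTop_nhds_zero_nat (u x))
  have hform := tendsto_energyForm hg.nonneg hg.c_nonneg hE hC hw hw hlim hlim
  have hzero : energyForm b c (fun _ => (0 : ℝ)) (fun _ => 0) = 0 := by simp [energyForm]
  rw [hzero] at hform
  have henergy : ∀ k, energy b c (fun x => u x - trunc (ε k) (u x)) = ENNReal.ofReal
      (energyForm b c (fun x => u x - trunc (ε k) (u x)) fun x => u x - trunc (ε k) (u x)) :=
    fun k => energy_eq_ofReal_energyForm hg.nonneg hg.c_nonneg
      ((hw k).summable_sq_sub hg.nonneg hE) ((hw k).summable_mul_sq hg.c_nonneg hC)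
  refine ⟨fun k x => trunc (ε k) (u x), fun k => hu.finSupp_trunc (hε k), ?_⟩
  have h := (ENNReal.tendsto_ofReal hform).add (ENNReal.tendsto_ofReal ((hlim o).pow 2))
  rw [ENNReal.ofReal_zero, zero_pow two_ne_zero, ENNReal.ofReal_zero, add_zero] at h
  exact h.congr fun k => by rw [henergy]

end Graph

theorem stmt9_general {X : Type*} (b : X → X → ℝ) (c m : X → ℝ) (o : X)
    (hg : IsGraph b c m) (u : X → ℝ) (hC0 : MemC0 u) (huF : MemF b u)
    (hl1 : Summable fun x => m x * |lap b c m u x|) :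
    MemD0 b c o u ∧
    (energy b c u).toReal = ∑' x, m x * u x * lap b c m u x ∧
    (energy b c u).toReal ≤ (⨆ x, |u x|) * ∑' x, m x * |lap b c m u x| := by
  obtain ⟨hE, hC⟩ := hg.summable_energy_of_memC0 huF hC0 hl1
  have hQ : (energy b c u).toReal = ∑' x, u x * (m x * lap b c m u x) := by
    rw [toReal_energy_eq_energyForm hg.nonneg hg.c_nonneg hE hC,
      hg.energyForm_self_eq_tsum huF hC0 hl1]
  refine ⟨hg.memD0_of_memC0 huF hC0 hl1 o, ?_, ?_⟩
  · rw [hQ]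
    exact tsum_congr fun x => by ring
  · rw [hQ]
    exact hg.tsum_mul_mul_lap_le hC0 hl1 fun _ => le_rfl

/-- Proposition 2.10. If `u ∈ C₀(X) ∩ 𝓕` with `𝓛u ∈ ℓ¹(X,m)`,
then `u ∈ 𝓓₀` and `𝓠(u) = ∑_x m(x) u(x) 𝓛u(x)`; in particular
`𝓠(u) ≤ ‖u‖_∞ ‖𝓛u‖₁`. -/
theorem stmt9 {X : Type*} [Countable X] (b : X → X → ℝ) (c m : X → ℝ) (o : X)
    (hg : IsGraph b c m) (u : X → ℝ) (hC0 : MemC0 u) (huF : MemF b u)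
    (hl1 : Summable fun x => m x * |lap b c m u x|) :
    MemD0 b c o u ∧
    (energy b c u).toReal = ∑' x, m x * u x * lap b c m u x ∧
    (energy b c u).toReal ≤ (⨆ x, |u x|) * ∑' x, m x * |lap b c m u x| :=
  stmt9_general b c m o hg u hC0 huF hl1

end HG
end
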